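/- Let y be a median of the locations x_1,...,x_n (i.e., at most n/2 agents lie strictly to each side) and let y* be any minimizer of SC(z) = Σ_i (w_i |z - x_i| + C_i) where w_i = 1 - C_i and C_i ∈ [0,1]. Then SC(y) ≤ 2 · SC(y*). -/

import Mathlib

/-!
Suppose the optimum `y*` lies to the left of the median `y`, at distance `d ≤ 1`. Moving the
facility from `y*` to `y` raises the distance cost of the agents left of `y` by at most `d`
each and lowers that of the agents at or right of `y` by exactly `d` each. Since `w = 1 - C`
with `C ≥ 0`, and the median has at least as many agents on its right as strictly on its left,
the net increase is at most `d` times the total congestion of the right-hand agents, which is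
at most `Σ C ≤ SC(y*)`. The other case is the mirror image.
-/

open Finset

variable {ι : Type*} [Fintype ι]

noncomputable def socialCost (x C : ι → ℝ) (z : ℝ) : ℝ :=
  ∑ i, ((1 - C i) * |z - x i| + C i)

theorem socialCost_neg (x C : ι → ℝ) (z : ℝ) : socialCost (-x) C (-z) = socialCost x C z := by
  simp only [socialCost, Pi.neg_apply, neg_sub_neg, abs_sub_comm]

theorem mul_abs_sub_le_of_le {w a b x : ℝ} (hw : 0 ≤ w) (hab : a ≤ b) :
    w * |b - x| ≤ w * |a - x| + (b - a) * (if x < b then w else -w) := by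
  split_ifs with hxb
  · have htri := abs_sub_le b a x
    rw [abs_of_nonneg (sub_nonneg.2 hab)] at htri
    nlinarith
  · rw [abs_of_nonpos (by linarith), abs_of_nonpos (by linarith)]
    linarith

theorem sum_mul_abs_sub_le_of_le {w x : ι → ℝ} (hw : ∀ i, 0 ≤ w i) {a b : ℝ} (hab : a ≤ b) :
    ∑ i, w i * |b - x i| ≤ ∑ i, w i * |a - x i| +
      (b - a) * (∑ i with x i < b, w i - ∑ i with ¬x i < b, w i) := by
  calc ∑ i, w i * |b - x i|
      ≤ ∑ i, (w i * |a - x i| + (b - a) * (if x i < b then w i else -w i)) :=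
        sum_le_sum fun i _ => mul_abs_sub_le_of_le (hw i) hab
    _ = _ := by
        rw [sum_add_distrib, ← mul_sum, sum_ite, sum_neg_distrib, ← sub_eq_add_neg]

theorem sum_filter_one_sub_sub_le {C : ι → ℝ} (hC : ∀ i, 0 ≤ C i) (p : ι → Prop)
    [DecidablePred p] (hcard : #{i | p i} ≤ #{i | ¬p i}) :
    ∑ i with p i, (1 - C i) - ∑ i with ¬p i, (1 - C i) ≤ ∑ i, C i := by
  have hsplit := sum_filter_add_sum_filter_not univ p C
  have hpos : 0 ≤ ∑ i with p i, C i := sum_nonneg fun i _ => hC i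
  have hcard' : (#{i | p i} : ℝ) ≤ #{i | ¬p i} := by exact_mod_cast hcard
  simp only [sum_sub_distrib, sum_const, nsmul_eq_mul, mul_one]
  linarith

theorem card_filter_lt_le_card_filter_not {x : ι → ℝ} {b : ℝ}
    (hmed : 2 * #{i | x i < b} ≤ Fintype.card ι) : #{i | x i < b} ≤ #{i | ¬x i < b} := by
  have := card_filter_add_card_filter_not (s := univ) (fun i => x i < b)
  rw [card_univ] at this
  omega

theorem socialCost_le_two_mul_of_le {x C : ι → ℝ} (hC : ∀ i, C i ∈ Set.Icc (0 : ℝ) 1)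
    {a b : ℝ} (hab : a ≤ b) (hba : b - a ≤ 1) (hmed : 2 * #{i | x i < b} ≤ Fintype.card ι) :
    socialCost x C b ≤ 2 * socialCost x C a := by
  have hdist := sum_mul_abs_sub_le_of_le (x := x) (fun i => sub_nonneg.2 (hC i).2) hab
  have hnet := sum_filter_one_sub_sub_le (fun i => (hC i).1) _
    (card_filter_lt_le_card_filter_not hmed)
  have hcong : 0 ≤ ∑ i, C i := sum_nonneg fun i _ => (hC i).1
  have hdist_nonneg : 0 ≤ ∑ i, (1 - C i) * |a - x i| :=
    sum_nonneg fun i _ => mul_nonneg (sub_nonneg.2 (hC i).2) (abs_nonneg _)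
  have hshift : (b - a) * (∑ i with x i < b, (1 - C i) - ∑ i with ¬x i < b, (1 - C i))
      ≤ ∑ i, C i :=
    (mul_le_mul_of_nonneg_left hnet (sub_nonneg.2 hab)).trans
      (mul_le_of_le_one_left hcong hba)
  simp only [socialCost, sum_add_distrib]
  linarith

theorem median_two_approx (n : ℕ) (x C : Fin n → ℝ)
    (hC : ∀ i, C i ∈ Set.Icc (0:ℝ) 1)
    (w : Fin n → ℝ) (hw : ∀ i, w i = 1 - C i)
    (SC : ℝ → ℝ) (hSC : ∀ z, SC z = ∑ i, (w i * |z - x i| + C i))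
    (y : ℝ) (hy : y ∈ Set.Icc (0:ℝ) 1)
    (hmed1 : 2 * (Finset.univ.filter (fun i => x i < y)).card ≤ n)
    (hmed2 : 2 * (Finset.univ.filter (fun i => y < x i)).card ≤ n)
    (ystar : ℝ) (hystar : ystar ∈ Set.Icc (0:ℝ) 1) :
    SC y ≤ 2 * SC ystar := by
  have hSC' : ∀ z, SC z = socialCost x C z := fun z => by simp only [hSC, hw, socialCost]
  rw [hSC', hSC']
  rcases le_total ystar y with h | h
  · exact socialCost_le_two_mul_of_le hC h (by linarith [hy.2, hystar.1]) (by simpa using hmed1)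
  · rw [← socialCost_neg x, ← socialCost_neg x C ystar]
    exact socialCost_le_two_mul_of_le hC (neg_le_neg h) (by linarith [hy.1, hystar.2])
      (by simpa using hmed2)
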